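/- Rays in directions f_i with i < ℓ leave the left bounding cone on the left: Let Δ ≥ 4 be an integer, u ∈ ℝ², and let i, ℓ be integers with 1 ≤ i ≤ Δ−2, 0 ≤ ℓ ≤ Δ−1 and i < ℓ. Then for every real α > 0 the point u + α·f_i does not belong to LBR(u, ℓ); moreover, every point of LBR(u, ℓ) other than u lies strictly to the right of the ray from u in direction f_i. -/

import Mathlib

open Set

/-- The vector `f i = (−1/2 + (i−1)/(Δ−3), 1)`. -/
noncomputable def f (Δ i : ℕ) : ℝ × ℝ :=
  (-(1 / 2) + ((i : ℝ) - 1) / ((Δ : ℝ) - 3), 1)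

/-- The cross product `cross(d, w) = d_x·w_y − d_y·w_x`. -/
def cross (d w : ℝ × ℝ) : ℝ := d.1 * w.2 - d.2 * w.1

/-- The left bounding cone `LBR(v, ℓ)`. -/
def LBR (Δ : ℕ) (v : ℝ × ℝ) (ℓ : ℕ) : Set (ℝ × ℝ) :=
  insert v {p | v.2 ≤ p.2 ∧
    (ℓ = 1 → cross (f Δ 1) (p - v) ≤ 0) ∧
    (Δ = 4 ∧ ℓ = 2 → v.1 < p.1) ∧
    (5 ≤ Δ ∧ 2 ≤ ℓ ∧ ℓ ≤ Δ - 2 →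
      cross (f Δ ℓ + (1 / ((Δ : ℝ) - 4)) • f Δ 1) (p - v) < 0) ∧
    (ℓ = Δ - 1 → cross (f Δ (Δ - 2)) (p - v) < 0)}

/-- The right bounding cone `RBR(v, r)`. -/
def RBR (Δ : ℕ) (v : ℝ × ℝ) (r : ℕ) : Set (ℝ × ℝ) :=
  insert v {p | v.2 ≤ p.2 ∧
    (r = 0 → 0 < cross (f Δ 1) (p - v)) ∧
    (Δ = 4 ∧ r = 1 → p.1 < v.1) ∧
    (5 ≤ Δ ∧ 1 ≤ r ∧ r ≤ Δ - 3 →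
      0 < cross (f Δ r + (1 / ((Δ : ℝ) - 4)) • f Δ (Δ - 2)) (p - v)) ∧
    (r = Δ - 2 → 0 ≤ cross (f Δ (Δ - 2)) (p - v))}

/-- The bounding region `BR(uv, ℓ, r) = LBR(u, ℓ) ∩ RBR(v, r)`. -/
def BR (Δ : ℕ) (u v : ℝ × ℝ) (ℓ r : ℕ) : Set (ℝ × ℝ) :=
  LBR Δ u ℓ ∩ RBR Δ v r

/-- The truncated bounding region `BRU(uv, ℓ, r, h)`. -/
def BRU (Δ : ℕ) (u v : ℝ × ℝ) (ℓ r : ℕ) (h : ℝ) : Set (ℝ × ℝ) :=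
  BR Δ u v ℓ r ∩ {p | p.2 < u.2 + h}

/-!
Every vector `f i` points into the upper half-plane, and for `w` in the closed upper half-plane
the sign of `cross (a, 1) w = a·w₂ − w₁` is monotone in the slope `a`. The slopes of the `f i`
increase with `i`, and each boundary direction of `LBR(u, ℓ)` has slope at least that of every
`f i` with `i < ℓ`; so whatever lies strictly right of the boundary lies strictly right of `f i`.
A point `u + α f i` with `α > 0` lies on the ray itself, hence not strictly to its right.
-/

theorem cross_smul_self (d : ℝ × ℝ) (a : ℝ) : cross d (a • d) = 0 := by
  simp only [cross, Prod.smul_fst, Prod.smul_snd, smul_eq_mul]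
  ring

theorem cross_neg_of_mul_le {d e w : ℝ × ℝ} (hd : d.2 = 1) (he : 0 < e.2) (hw : 0 ≤ w.2)
    (hde : d.1 * e.2 ≤ e.1) (h : cross e w < 0) : cross d w < 0 := by
  unfold cross at *
  rw [hd]
  nlinarith [mul_le_mul_of_nonneg_right hde hw]

@[simp]
theorem f_snd (Δ i : ℕ) : (f Δ i).2 = 1 := rfl

theorem f_fst_sub (Δ i j : ℕ) :
    (f Δ i).1 - (f Δ j).1 = ((i : ℝ) - j) / ((Δ : ℝ) - 3) := by
  simp only [f]
  ring

theorem f_fst_mono {Δ i j : ℕ} (hΔ : 3 ≤ Δ) (hij : i ≤ j) : (f Δ i).1 ≤ (f Δ j).1 := by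
  rw [← sub_nonneg, f_fst_sub]
  have : (3 : ℝ) ≤ Δ := by exact_mod_cast hΔ
  have : (i : ℝ) ≤ j := by exact_mod_cast hij
  apply div_nonneg <;> linarith

theorem cross_f_neg_of_cross_f_last_neg {Δ i : ℕ} (hΔ : 3 ≤ Δ) (hi : i ≤ Δ - 2) {w : ℝ × ℝ}
    (hw : 0 ≤ w.2) (h : cross (f Δ (Δ - 2)) w < 0) : cross (f Δ i) w < 0 :=
  cross_neg_of_mul_le (f_snd Δ i) one_pos hw (by simpa using f_fst_mono hΔ hi) h

/-- The slope condition `x_i (1 + c) ≤ x_ℓ + c x_1`, with `c = 1/(Δ−4)` and `x_k` the slope of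
`f k`, reduces to `(i − 1) ≤ (ℓ − i)(Δ − 4)`. -/
theorem cross_f_neg_of_cross_f_mid_neg {Δ i ℓ : ℕ} (hΔ : 5 ≤ Δ) (hiℓ : i < ℓ) (hℓ : ℓ ≤ Δ - 2)
    {w : ℝ × ℝ} (hw : 0 ≤ w.2) (h : cross (f Δ ℓ + (1 / ((Δ : ℝ) - 4)) • f Δ 1) w < 0) :
    cross (f Δ i) w < 0 := by
  have hD : (5 : ℝ) ≤ Δ := by exact_mod_cast hΔ
  have hiℓ' : (i : ℝ) + 1 ≤ ℓ := by exact_mod_cast hiℓ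
  have hiΔ : (i : ℝ) + 3 ≤ Δ := by exact_mod_cast (by omega : i + 3 ≤ Δ)
  have hc : 0 < 1 / ((Δ : ℝ) - 4) := by apply div_pos <;> linarith
  have hslope : 1 / ((Δ : ℝ) - 4) * ((i : ℝ) - 1) ≤ (ℓ : ℝ) - i := by
    rw [one_div_mul_eq_div, div_le_iff₀ (by linarith)]
    nlinarith
  have key : 1 / ((Δ : ℝ) - 4) * ((f Δ i).1 - (f Δ 1).1) ≤ (f Δ ℓ).1 - (f Δ i).1 := by
    rw [f_fst_sub, f_fst_sub, Nat.cast_one, ← mul_div_assoc]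
    exact div_le_div_of_nonneg_right hslope (by linarith)
  refine cross_neg_of_mul_le (f_snd Δ i) ?_ hw ?_ h <;>
    simp only [Prod.fst_add, Prod.snd_add, Prod.smul_fst, Prod.smul_snd, smul_eq_mul, f_snd]
  · linarith
  · linear_combination key

theorem cross_f_neg_of_fst_pos {Δ i : ℕ} (hΔ : 3 ≤ Δ) (hi : i ≤ 1) {w : ℝ × ℝ}
    (hw : 0 ≤ w.2) (h : 0 < w.1) : cross (f Δ i) w < 0 := by
  have hfst : (f Δ i).1 ≤ 0 := by
    have := f_fst_mono hΔ hi
    simp only [f] at this ⊢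
    norm_num at this
    linarith
  exact cross_neg_of_mul_le (e := (0, 1)) (f_snd Δ i) one_pos hw (by simpa using hfst)
    (by simpa [cross] using h)

/-- Rays in directions f i with i < ℓ leave the left bounding cone on the left. -/
theorem ray_leaves_LBR_left (Δ : ℕ) (hΔ : 4 ≤ Δ) (u : ℝ × ℝ) (i ℓ : ℕ)
    (hi1 : 1 ≤ i) (hi2 : i ≤ Δ - 2) (hℓ : ℓ ≤ Δ - 1) (hiℓ : i < ℓ) :
    (∀ α : ℝ, 0 < α → u + α • f Δ i ∉ LBR Δ u ℓ) ∧
    (∀ p ∈ LBR Δ u ℓ, p ≠ u → cross (f Δ i) (p - u) < 0) := by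
  have hright : ∀ p ∈ LBR Δ u ℓ, p ≠ u → cross (f Δ i) (p - u) < 0 := by
    rintro p (rfl | ⟨hp2, -, hfour, hmid, hlast⟩) hne
    · exact absurd rfl hne
    have hw : 0 ≤ (p - u).2 := sub_nonneg.2 hp2
    rcases hℓ.eq_or_lt with hℓ | hℓ
    · exact cross_f_neg_of_cross_f_last_neg (by omega) hi2 hw (hlast hℓ)
    rcases hΔ.eq_or_lt with rfl | hΔ
    · exact cross_f_neg_of_fst_pos (by norm_num) (by omega) hw
        (sub_pos.2 (hfour ⟨rfl, by omega⟩))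
    · exact cross_f_neg_of_cross_f_mid_neg hΔ hiℓ (by omega) hw (hmid ⟨hΔ, by omega, by omega⟩)
  refine ⟨fun α hα hmem => ?_, hright⟩
  have hne : u + α • f Δ i ≠ u := fun h => by
    simpa [hα.ne'] using congrArg (fun q => q.2 - u.2) h
  simpa [cross_smul_self] using hright _ hmem hne
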